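/- Let p be an odd prime. Then the first moment of the family y² = x³ + Tx² − (T+3)x + 1 equals −2p·c_{p,1;4}, where c_{p,1;4} = 1 if p ≡ 1 (mod 4) and 0 otherwise; that is, Σ_{t=0}^{p−1} ( −Σ_{x=0}^{p−1} ((x³ + t·x² − (t+3)x + 1)/p) ) = −2p·c_{p,1;4}. -/

import Mathlib

/-!
Write `x³ + t x² − (t + 3) x + 1 = (x² − x) t + (x³ − 3x + 1)`. The family is linear in the
parameter, so after exchanging the two sums every `x` with `x² ≠ x` contributes a complete
character sum of an affine function of `t`, which vanishes. Only `x = 0` and `x = 1` survive,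
contributing `p·(1/p) = p` and `p·(−1/p)`, so the first moment is `−p(1 + (−1/p))`.
-/

open Finset

theorem ZMod.sum_range_natCast {M : Type*} [AddCommMonoid M] (n : ℕ) [NeZero n]
    (f : ZMod n → M) : ∑ i ∈ range n, f i = ∑ a : ZMod n, f a :=
  sum_nbij' (fun i => (i : ZMod n)) ZMod.val
    (fun _ _ => mem_univ _) (fun a _ => mem_range.2 (ZMod.val_lt a))
    (fun _ hi => ZMod.val_cast_of_lt (mem_range.1 hi)) (fun a _ => ZMod.natCast_zmod_val a)
    (fun _ _ => rfl)

namespace MulChar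

variable {F R : Type*} [Field F] [Fintype F] [CommRing R] [IsDomain R]
  {χ : MulChar F R}

theorem sum_mul_add_eq_zero (hχ : χ ≠ 1) {a : F} (ha : a ≠ 0) (b : F) :
    ∑ t, χ (a * t + b) = 0 :=
  ((Equiv.mulLeft₀ a ha).trans (Equiv.addRight b)).sum_comp χ ▸ sum_eq_zero_of_ne_one hχ

theorem sum_sum_mul_add_eq_card_mul [DecidableEq F] (hχ : χ ≠ 1) (A B : F → F) :
    ∑ t, ∑ x, χ (A x * t + B x) = Fintype.card F * ∑ x ∈ univ with A x = 0, χ (B x) := by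
  rw [sum_comm, sum_filter, mul_sum]
  refine sum_congr rfl fun x _ => ?_
  split_ifs with hA
  · simp [hA]
  · rw [mul_zero, sum_mul_add_eq_zero hχ hA]

end MulChar

theorem quadraticChar_first_moment_washington {F : Type*} [Field F] [Fintype F]
    [DecidableEq F] (hF : ringChar F ≠ 2) :
    ∑ t : F, ∑ x : F, quadraticChar F (x ^ 3 + t * x ^ 2 - (t + 3) * x + 1)
      = Fintype.card F * (1 + quadraticChar F (-1)) := by
  have hlinear : ∀ t x : F,
      x ^ 3 + t * x ^ 2 - (t + 3) * x + 1 = (x ^ 2 - x) * t + (x ^ 3 - 3 * x + 1) :=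
    fun _ _ => by ring
  have hzeros : ({x | x ^ 2 - x = 0} : Finset F) = {0, 1} := by
    ext x
    simp [sub_eq_zero, sq, ← isIdempotentElem_iff]
  simp_rw [hlinear]
  rw [MulChar.sum_sum_mul_add_eq_card_mul (quadraticChar_ne_one hF), hzeros,
    sum_pair zero_ne_one]
  norm_num

/-- For an odd prime `p`, the first moment of the family
`y² = x³ + Tx² − (T+3)x + 1` equals `−2p·c_{p,1;4}`, where `c_{p,1;4} = 1`
if `p ≡ 1 (mod 4)` and `0` otherwise. -/
theorem first_moment_washington_family (p : ℕ) [Fact p.Prime] (hodd : p ≠ 2) :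
    ∑ t ∈ Finset.range p,
        (- ∑ x ∈ Finset.range p,
            legendreSym p
              ((x : ℤ) ^ 3 + (t : ℤ) * (x : ℤ) ^ 2 - ((t : ℤ) + 3) * (x : ℤ) + 1))
      = -2 * (p : ℤ) * (if p % 4 = 1 then 1 else 0) := by
  have hchar : ringChar (ZMod p) ≠ 2 := (ZMod.ringChar_zmod_n p).trans_ne hodd
  have hp_mod_two : p % 2 = 1 := (Fact.out : p.Prime).mod_two_eq_one_iff_ne_two.2 hodd
  calc _ = -∑ t : ZMod p, ∑ x : ZMod p,
        quadraticChar (ZMod p) (x ^ 3 + t * x ^ 2 - (t + 3) * x + 1) := by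
        simp_rw [← ZMod.sum_range_natCast p, legendreSym, sum_neg_distrib]
        push_cast
        rfl
    _ = -(p * (1 + ZMod.χ₄ p)) := by
        rw [quadraticChar_first_moment_washington hchar, quadraticChar_neg_one hchar, ZMod.card]
    _ = _ := by
        rw [ZMod.χ₄_nat_eq_if_mod_four, if_neg (by omega)]
        split_ifs <;> ring
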